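/- arXiv:2505.10100 — 5 statements merged into one kernel-verified Lean document; each statement's English description precedes it below -/
import Mathlib

section
/- Let n ≥ 4, let G be a group with a central element z of order 2, and let π : G → S_n be a surjective group homomorphism with kernel {1, z}. Assume that for every pair of disjoint transpositions τ₁, τ₂ ∈ S_n and any lifts x, y ∈ G with π(x) = τ₁, π(y) = τ₂, the commutator satisfies [x,y] = z. Then: (1) for distinct a, b ∈ {1,…,n}, any lift x of the transposition (a,b), and any lift y of a permutation σ fixing both a and b, one has [x,y] = 1 if σ is even and [x,y] = z if σ is odd; (2) consequently, for any cyclic subgroup U of the alternating group on {1,…,n}∖{a,b}, the preimage π^{-1}(⟨(a,b)⟩ × U) is an abelian subgroup of G. -/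
/-!
Fix a lift `x` of `(a b)` and write `[x, y] = x⁻¹ y⁻¹ x y`. When `[x, t] = z` is central,
`[x, t * y] = z * [x, y]`; writing a permutation fixing `a, b` as a product of `k` transpositions
of the other points, whose lifts all have commutator `z` with `x`, gives `[x, y] = z ^ k`, which
is `1` or `z` according to the sign. For (2), write `U = ⟨w⟩`: then `⟨(a b)⟩ × U` is generated by
the images of lifts `u, v` of `(a b)` and `w`, which commute by (1), so its preimage is generated
by `u`, `v` and the central kernel.
-/

open Equiv Equiv.Perm Subgroup

section Commutator

variable {G : Type*} [Group G]

theorem inv_mul_inv_mul_mul_mul_mul_right_of_mem_center {x w c : G} (hc : c ∈ center G)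
    (hw : x⁻¹ * w⁻¹ * x * w = c) (y : G) :
    x⁻¹ * (w * y)⁻¹ * x * (w * y) = c * (x⁻¹ * y⁻¹ * x * y) :=
  calc x⁻¹ * (w * y)⁻¹ * x * (w * y) = x⁻¹ * y⁻¹ * x * ((x⁻¹ * w⁻¹ * x * w) * y) := by group
    _ = x⁻¹ * y⁻¹ * x * (y * c) := by rw [hw, mem_center_iff.mp hc y]
    _ = (x⁻¹ * y⁻¹ * x * y) * c := by group
    _ = c * (x⁻¹ * y⁻¹ * x * y) := mem_center_iff.mp hc _

theorem commute_of_inv_mul_inv_mul_mul_mul_eq_one {x y : G} (h : x⁻¹ * y⁻¹ * x * y = 1) :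
    Commute x y := by
  rw [← inv_inv x, ← inv_inv y, Commute.inv_inv_iff, ← commutatorElement_eq_one_iff_commute,
    commutatorElement_def, inv_inv, inv_inv, h]

end Commutator

section Lifts

variable {G α : Type*} [Group G] [Fintype α] [DecidableEq α] {π : G →* Perm α} {z : G}

theorem inv_mul_inv_mul_mul_mul_eq_ite_sign_ofSubtype (hπ : Function.Surjective π)
    (hz2 : z ^ 2 = 1) (hzc : z ∈ center G) (hker : ∀ g, π g = 1 → g = 1 ∨ g = z)
    {p : α → Prop} [DecidablePred p] {x : G}
    (hx : ∀ c d, c ≠ d → p c → p d → ∀ w, π w = swap c d → x⁻¹ * w⁻¹ * x * w = z)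
    (τ : Perm (Subtype p)) {y : G} (hy : π y = ofSubtype τ) :
    x⁻¹ * y⁻¹ * x * y = if sign τ = 1 then 1 else z := by
  induction τ using swap_induction_on generalizing y with
  | one =>
    rw [map_one] at hy
    rcases hker y hy with rfl | rfl
    · simp
    · rw [if_pos Perm.sign_one, mul_assoc, mem_center_iff.mp hzc x]
      group
  | swap_mul τ c d hcd ih =>
    obtain ⟨w, hw⟩ := hπ (swap (c : α) d)
    have hwy : π (w⁻¹ * y) = ofSubtype τ := by
      rw [map_mul, map_inv, hw, hy, map_mul, ofSubtype_swap_eq, inv_mul_cancel_left]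
    have hxw := hx c d (Subtype.coe_injective.ne hcd) c.2 d.2 w hw
    rw [← mul_inv_cancel_left w y, inv_mul_inv_mul_mul_mul_mul_right_of_mem_center hzc hxw,
      ih hwy, map_mul, sign_swap hcd]
    rcases Int.units_eq_one_or (sign τ) with h | h <;> simp [h, ← pow_two, hz2]

theorem inv_mul_inv_mul_mul_mul_eq_ite_sign (hπ : Function.Surjective π)
    (hz2 : z ^ 2 = 1) (hzc : z ∈ center G) (hker : ∀ g, π g = 1 → g = 1 ∨ g = z)
    {p : α → Prop} [DecidablePred p] {x : G}
    (hx : ∀ c d, c ≠ d → p c → p d → ∀ w, π w = swap c d → x⁻¹ * w⁻¹ * x * w = z)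
    {σ : Perm α} (hσ : ∀ i, σ i ≠ i → p i) {y : G} (hy : π y = σ) :
    x⁻¹ * y⁻¹ * x * y = if sign σ = 1 then 1 else z := by
  have hpσ : ∀ i, p (σ i) ↔ p i := fun i => by
    by_cases hi : σ i = i
    · rw [hi]
    · exact iff_of_true (hσ _ (σ.injective.ne hi)) (hσ i hi)
  have hσ' := ofSubtype_subtypePerm hpσ hσ
  rw [← hσ', sign_ofSubtype]
  exact inv_mul_inv_mul_mul_mul_eq_ite_sign_ofSubtype hπ hz2 hzc hker hx _ (hy.trans hσ'.symm)

end Lifts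

theorem commute_of_mem_comap_closure_pair {G H : Type*} [Group G] [Group H] (π : G →* H)
    (hker : π.ker ≤ center G) {u v : G} (huv : Commute u v) {x y : G}
    (hx : x ∈ (closure {π u, π v}).comap π) (hy : y ∈ (closure {π u, π v}).comap π) :
    Commute x y := by
  rw [← Set.image_pair, ← MonoidHom.map_closure, comap_map_eq, ← closure_eq π.ker, ← Subgroup.closure_union]
    at hx hy
  have : IsMulCommutative (closure ({u, v} ∪ (π.ker : Set G))) := by
    refine isMulCommutative_closure ?_
    rintro a (ha | ha) b (hb | hb)
    · rcases ha with rfl | rfl <;> rcases hb with rfl | rfl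
      exacts [rfl, huv.eq, huv.symm.eq, rfl]
    · exact mem_center_iff.mp (hker hb) a
    · exact (mem_center_iff.mp (hker ha) b).symm
    · exact mem_center_iff.mp (hker hb) a
  exact setLike_mul_comm hx hy

theorem stmt9_general (n : ℕ) (G : Type*) [Group G]
    (z : G) (hz2 : z ^ 2 = 1) (hzc : z ∈ Subgroup.center G)
    (π : G →* Equiv.Perm (Fin n)) (hπsurj : Function.Surjective π)
    (hker : ∀ g : G, π g = 1 ↔ g = 1 ∨ g = z)
    (hcomm : ∀ a b c d : Fin n, a ≠ b → c ≠ d → a ≠ c → a ≠ d → b ≠ c → b ≠ d →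
      ∀ x y : G, π x = Equiv.swap a b → π y = Equiv.swap c d →
        x⁻¹ * y⁻¹ * x * y = z) :
    (∀ a b : Fin n, a ≠ b → ∀ σ : Equiv.Perm (Fin n), σ a = a → σ b = b →
      ∀ x y : G, π x = Equiv.swap a b → π y = σ →
        (Equiv.Perm.sign σ = 1 → x⁻¹ * y⁻¹ * x * y = 1) ∧
        (Equiv.Perm.sign σ = -1 → x⁻¹ * y⁻¹ * x * y = z)) ∧
    (∀ a b : Fin n, a ≠ b → ∀ U : Subgroup (Equiv.Perm (Fin n)), IsCyclic U →
      (∀ σ ∈ U, σ a = a ∧ σ b = b ∧ Equiv.Perm.sign σ = 1) →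
      ∀ x y : G,
        x ∈ Subgroup.comap π (Subgroup.closure {Equiv.swap a b} ⊔ U) →
        y ∈ Subgroup.comap π (Subgroup.closure {Equiv.swap a b} ⊔ U) →
        Commute x y) := by
  have part1 : ∀ a b : Fin n, a ≠ b → ∀ σ : Perm (Fin n), σ a = a → σ b = b →
      ∀ x y : G, π x = swap a b → π y = σ →
        x⁻¹ * y⁻¹ * x * y = if sign σ = 1 then 1 else z := by
    intro a b hab σ ha hb x y hx hy
    refine inv_mul_inv_mul_mul_mul_eq_ite_sign hπsurj hz2 hzc (fun g => (hker g).1)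
      (p := fun i => i ≠ a ∧ i ≠ b) ?_ ?_ hy
    · exact fun c d hcd hc hd w hw =>
        hcomm a b c d hab hcd hc.1.symm hd.1.symm hc.2.symm hd.2.symm x w hx hw
    · exact fun i hi => ⟨by rintro rfl; exact hi ha, by rintro rfl; exact hi hb⟩
  refine ⟨fun a b hab σ ha hb x y hx hy => ?_, fun a b hab U hU hUab x y hx hy => ?_⟩
  · rw [part1 a b hab σ ha hb x y hx hy]
    exact ⟨fun h => if_pos h, fun h => if_neg (by simp [h])⟩
  · obtain ⟨w, rfl⟩ := U.isCyclic_iff_exists_zpowers_eq_top.mp hU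
    obtain ⟨ha, hb, hw⟩ := hUab w (mem_zpowers w)
    obtain ⟨u, hu⟩ := hπsurj (swap a b)
    obtain ⟨v, hv⟩ := hπsurj w
    have huv : Commute u v := commute_of_inv_mul_inv_mul_mul_mul_eq_one <| by
      rw [part1 a b hab w ha hb u v hu hv, if_pos hw]
    have hker_le : π.ker ≤ center G := fun g hg => by
      rcases (hker g).1 hg with rfl | rfl
      exacts [one_mem _, hzc]
    rw [zpowers_eq_closure, ← Subgroup.closure_union, Set.singleton_union, ← hu, ← hv] at hx hy
    exact commute_of_mem_comap_closure_pair π hker_le huv hx hy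

/-- Let `n ≥ 4`, `G` a group with a central element `z` of order 2, and
`π : G → S_n` a surjective homomorphism with kernel `{1, z}`. Assume that for every pair of
disjoint transpositions `τ₁, τ₂ ∈ S_n` and any lifts `x, y`, one has `[x, y] = z`. Then:
(1) for distinct `a, b`, any lift `x` of the transposition `(a b)` and any lift `y` of a
permutation `σ` fixing `a` and `b`, one has `[x, y] = 1` if `σ` is even and `[x, y] = z` if
`σ` is odd; (2) for any cyclic subgroup `U` of the alternating group on `{1,…,n} ∖ {a, b}`,
the preimage `π⁻¹(⟨(a b)⟩ × U)` is an abelian subgroup of `G`. -/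
theorem stmt9 (n : ℕ) (hn : 4 ≤ n) (G : Type*) [Group G]
    (z : G) (hz1 : z ≠ 1) (hz2 : z ^ 2 = 1) (hzc : z ∈ Subgroup.center G)
    (π : G →* Equiv.Perm (Fin n)) (hπsurj : Function.Surjective π)
    (hker : ∀ g : G, π g = 1 ↔ g = 1 ∨ g = z)
    (hcomm : ∀ a b c d : Fin n, a ≠ b → c ≠ d → a ≠ c → a ≠ d → b ≠ c → b ≠ d →
      ∀ x y : G, π x = Equiv.swap a b → π y = Equiv.swap c d →
        x⁻¹ * y⁻¹ * x * y = z) :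
    (∀ a b : Fin n, a ≠ b → ∀ σ : Equiv.Perm (Fin n), σ a = a → σ b = b →
      ∀ x y : G, π x = Equiv.swap a b → π y = σ →
        (Equiv.Perm.sign σ = 1 → x⁻¹ * y⁻¹ * x * y = 1) ∧
        (Equiv.Perm.sign σ = -1 → x⁻¹ * y⁻¹ * x * y = z)) ∧
    (∀ a b : Fin n, a ≠ b → ∀ U : Subgroup (Equiv.Perm (Fin n)), IsCyclic U →
      (∀ σ ∈ U, σ a = a ∧ σ b = b ∧ Equiv.Perm.sign σ = 1) →
      ∀ x y : G,
        x ∈ Subgroup.comap π (Subgroup.closure {Equiv.swap a b} ⊔ U) →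
        y ∈ Subgroup.comap π (Subgroup.closure {Equiv.swap a b} ⊔ U) →
        Commute x y) :=
  stmt9_general n G z hz2 hzc π hπsurj hker hcomm
end

section
/- Let E be a finite group with a central subgroup Z of order 2 such that the quotient E/Z is an elementary abelian 2-group. If every element of E/Z has a preimage in E of order at most 2, then E itself is an elementary abelian 2-group; in particular, there exists a subgroup H ≤ E with H ∩ Z = {1} that maps isomorphically onto E/Z under the quotient map (i.e., the central extension 1 → Z → E → E/Z → 1 splits). -/
/-!
If `e` is an involution in the coset `gZ`, then `g = e z` with `z` central and `z² = 1`, so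
`g² = e² z² = 1`. A group of exponent two is abelian, hence a vector space over `ZMod 2`, where
the subspace `Z` has a complement; a complement of `Z` maps bijectively onto `E ⧸ Z`.
-/

section

variable {G : Type*} [Group G]

theorem Commute.of_forall_sq_eq_one (hG : ∀ g : G, g ^ 2 = 1) (a b : G) : Commute a b :=
  Commute.of_orderOf_dvd_two (fun g ↦ orderOf_dvd_of_pow_eq_one (hG g)) a b

namespace Subgroup

theorem sq_eq_one_of_forall_coset_sq_eq_one {Z : Subgroup G} (hZc : Z ≤ center G)
    (hZ : ∀ z ∈ Z, z ^ 2 = 1) (hlift : ∀ x : G ⧸ Z, ∃ e : G, (e : G ⧸ Z) = x ∧ e ^ 2 = 1)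
    (g : G) : g ^ 2 = 1 := by
  obtain ⟨e, he, he2⟩ := hlift g
  have hz : e⁻¹ * g ∈ Z := QuotientGroup.eq.mp he
  have hcomm : Commute e (e⁻¹ * g) := mem_center_iff.mp (hZc hz) e
  rw [← mul_inv_cancel_left e g, hcomm.mul_pow, he2, hZ _ hz, one_mul]

theorem complementedLattice_of_forall_sq_eq_one (hG : ∀ g : G, g ^ 2 = 1) :
    ComplementedLattice (Subgroup G) := by
  let _ : CommGroup G := { mul_comm := fun a b ↦ (Commute.of_forall_sq_eq_one hG a b).eq }
  let _ : Module (ZMod 2) (Additive G) := AddCommGroup.zmodModule (hG ·)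
  exact (toAddSubgroup.trans (AddSubgroup.toZModSubmodule 2)).symm.complementedLattice

theorem isComplement'_of_isCompl {H K : Subgroup G} [K.Normal] (h : IsCompl H K) :
    IsComplement' H K :=
  isComplement'_of_disjoint_and_mul_eq_univ h.disjoint <| by
    rw [← mul_normal, h.sup_eq_top, coe_top]

theorem exists_isComplement'_of_forall_sq_eq_one (hG : ∀ g : G, g ^ 2 = 1) (K : Subgroup G) :
    ∃ H : Subgroup G, IsComplement' H K := by
  have := complementedLattice_of_forall_sq_eq_one hG
  have : K.Normal := ⟨fun n hn g ↦ by
    rwa [(Commute.of_forall_sq_eq_one hG g n).eq, mul_inv_cancel_right]⟩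
  obtain ⟨H, hH⟩ := exists_isCompl K
  exact ⟨H, isComplement'_of_isCompl hH.symm⟩

end Subgroup

end

theorem stmt10_general (E : Type*) [Group E] (Z : Subgroup E)
    (hZc : Z ≤ Subgroup.center E) (hZ2 : Nat.card Z = 2)
    (hlift : ∀ x : E ⧸ Z, ∃ e : E, (e : E ⧸ Z) = x ∧ e ^ 2 = 1) :
    (∀ e : E, e ^ 2 = 1) ∧ (∀ e e' : E, e * e' = e' * e) ∧
      ∃ H : Subgroup E, H ⊓ Z = ⊥ ∧
        Function.Bijective (fun h : H => ((h : E) : E ⧸ Z)) := by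
  have hZ : ∀ z ∈ Z, z ^ 2 = 1 := fun z hz ↦ by
    simpa [hZ2] using congrArg Subtype.val (pow_card_eq_one' (x := (⟨z, hz⟩ : Z)))
  have hsq := Subgroup.sq_eq_one_of_forall_coset_sq_eq_one hZc hZ hlift
  obtain ⟨H, hH⟩ := Subgroup.exists_isComplement'_of_forall_sq_eq_one hsq Z
  exact ⟨hsq, fun e e' ↦ (Commute.of_forall_sq_eq_one hsq e e').eq,
    H, hH.disjoint.eq_bot, Subgroup.isComplement_subgroup_right_iff_bijective.mp hH⟩

/-- Let `E` be a finite group with a central subgroup `Z` of order 2 such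
that `E ⧸ Z` is an elementary abelian 2-group. If every element of `E ⧸ Z` has a preimage in
`E` of order at most 2, then `E` itself is an elementary abelian 2-group; in particular
there is a subgroup `H ≤ E` with `H ⊓ Z = ⊥` mapping isomorphically onto `E ⧸ Z` (the
central extension splits). -/
theorem stmt10 (E : Type*) [Group E] [Finite E] (Z : Subgroup E) [Z.Normal]
    (hZc : Z ≤ Subgroup.center E) (hZ2 : Nat.card Z = 2)
    (hquot : ∀ x : E ⧸ Z, x ^ 2 = 1)
    (hlift : ∀ x : E ⧸ Z, ∃ e : E, (e : E ⧸ Z) = x ∧ e ^ 2 = 1) :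
    (∀ e : E, e ^ 2 = 1) ∧ (∀ e e' : E, e * e' = e' * e) ∧
      ∃ H : Subgroup E, H ⊓ Z = ⊥ ∧
        Function.Bijective (fun h : H => ((h : E) : E ⧸ Z)) :=
  stmt10_general E Z hZc hZ2 hlift
end

section
/- Let n ≥ 7 be an integer with n ≡ 3 (mod 4) and let g(X) = Σ_{i=0}^{n−2} (i+1)X^i (a polynomial of degree n−2 with leading coefficient n−1). Then g has n−2 distinct roots r_1,…,r_{n−2} in ℂ, and its discriminant satisfies (n−1)^{2n−6} · ∏_{1≤i<j≤n−2} (r_i − r_j)² = 2 · n^{n−3} · (n−1)^{n−4}. -/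
open Polynomial Finset

/-!
Write `m = n - 2`, so that `g = 1 + 2X + ⋯ + (m+1)Xᵐ`. Then
`(X - 1)² g = (m+1) X^(m+2) - (m+2) X^(m+1) + 1`, and differentiating shows that every root `r`
of `g` satisfies `(r - 1) g'(r) = (m+1)(m+2) rᵐ`; as `g(0) = 1`, all roots are simple. Taking the
product over the roots, `g(0) = 1` and `2 g(1) = (m+1)(m+2)` evaluate `∏ r` and `∏ (r - 1)`, which
gives `(m+2) ∏ g'(r) = 2 (m+2)ᵐ`. On the other hand `∏ g'(r) = (m+1)ᵐ ∏_{i ≠ j} (rᵢ - rⱼ)`, which is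
`(-1)^(m(m-1)/2)` times the product of the squared differences, and this sign is `+1` for
`m ≡ 1 (mod 4)`.
-/

theorem prod_prod_erase_sub_eq_neg_one_pow_mul {R : Type*} [CommRing R] {m : ℕ} (r : Fin m → R) :
    ∏ i, ∏ j ∈ univ.erase i, (r i - r j) =
      (-1) ^ (m * (m - 1) / 2) * ∏ i, ∏ j ∈ Ioi i, (r i - r j) ^ 2 := by
  have hsplit : ∀ i : Fin m, univ.erase i = Ioi i ∪ Iio i := fun i => by
    ext j
    simp [ne_comm]
  have hdisj : ∀ i : Fin m, Disjoint (Ioi i) (Iio i) := fun i =>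
    disjoint_left.mpr fun j hj hj' => lt_asymm (mem_Ioi.mp hj) (mem_Iio.mp hj')
  have hswap : ∏ i, ∏ j ∈ Iio i, (r i - r j) = ∏ i, ∏ j ∈ Ioi i, (r j - r i) :=
    prod_comm' fun i j => by simp
  have hcard : ∑ i : Fin m, #(Ioi i) = m * (m - 1) / 2 := by
    simp only [Fin.card_Ioi]
    rw [Fin.sum_univ_eq_sum_range (fun i => m - 1 - i), sum_range_reflect (fun i => i) m,
      sum_range_id]
  calc ∏ i, ∏ j ∈ univ.erase i, (r i - r j)
      = ∏ i, ∏ j ∈ Ioi i, ((-1) * (r i - r j) ^ 2) := by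
        simp_rw [hsplit, prod_union (hdisj _), prod_mul_distrib, hswap, ← prod_mul_distrib]
        exact prod_congr rfl fun i _ => prod_congr rfl fun j _ => by ring
    _ = _ := by
        simp_rw [prod_mul_distrib, prod_const, prod_pow_eq_pow_sum, hcard]

theorem eval_derivative_C_mul_prod_X_sub_C {R ι : Type*} [CommRing R] [Fintype ι]
    [DecidableEq ι] (a : R) (r : ι → R) (i : ι) :
    (derivative (C a * ∏ j, (X - C (r j)))).eval (r i) = a * ∏ j ∈ univ.erase i, (r i - r j) := by
  rw [derivative_C_mul, eval_C_mul, ← Lagrange.nodal_eq,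
    Lagrange.eval_nodal_derivative_eval_node_eq (mem_univ i), Lagrange.eval_nodal]

theorem Multiset.Nodup.exists_injective_fin {α : Type*} {s : Multiset α} (hs : s.Nodup) {m : ℕ}
    (hm : Multiset.card s = m) :
    ∃ r : Fin m → α, Function.Injective r ∧ univ.val.map r = s := by
  obtain ⟨l, rfl⟩ : ∃ l : List α, (l : Multiset α) = s := ⟨s.toList, s.coe_toList⟩
  obtain rfl : l.length = m := hm
  exact ⟨fun i => l[(i : ℕ)], List.nodup_iff_injective_getElem.mp hs, by
    rw [Fin.univ_val_map, List.ofFn_getElem]⟩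

theorem Polynomial.exists_injective_fin_roots {R : Type*} [CommRing R] [IsDomain R] {p : R[X]}
    (hp : p ≠ 0) (hsplit : Splits p) (hnodup : p.roots.Nodup) {m : ℕ} (hm : p.natDegree = m) :
    ∃ r : Fin m → R, Function.Injective r ∧ (∀ x, p.IsRoot x ↔ ∃ i, r i = x) ∧
      p = C p.leadingCoeff * ∏ i, (X - C (r i)) := by
  obtain ⟨r, hr, hroots⟩ :=
    hnodup.exists_injective_fin ((splits_iff_card_roots.mp hsplit).trans hm)
  refine ⟨r, hr, fun x => ?_, ?_⟩
  · rw [← mem_roots hp, ← hroots]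
    simp
  · conv_lhs => rw [hsplit.eq_prod_roots, ← hroots, Multiset.map_map]
    rfl

/-- The polynomial `g` of the statement for `n = m + 2`, indexed by its degree `m`. -/
noncomputable def weightedGeomSum (R : Type*) [Semiring R] (m : ℕ) : R[X] :=
  ∑ i ∈ range (m + 1), C ((i : R) + 1) * X ^ i

theorem X_sub_one_sq_mul_weightedGeomSum {R : Type*} [CommRing R] (m : ℕ) :
    (X - 1) ^ 2 * weightedGeomSum R m =
      C ((m : R) + 1) * X ^ (m + 2) - C ((m : R) + 2) * X ^ (m + 1) + 1 := by
  induction m with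
  | zero =>
    simp only [weightedGeomSum, zero_add, range_one, sum_singleton, Nat.cast_zero, pow_zero,
      pow_one, mul_one, map_one, map_ofNat C]
    ring
  | succ m ih =>
    rw [weightedGeomSum, sum_range_succ, mul_add, ← weightedGeomSum, ih]
    simp only [map_add, map_natCast, map_one, map_ofNat]
    push_cast
    ring

theorem coeff_weightedGeomSum {R : Type*} [Semiring R] (m i : ℕ) :
    (weightedGeomSum R m).coeff i = if i ≤ m then (i : R) + 1 else 0 := by
  simp only [weightedGeomSum, finsetSum_coeff, coeff_C_mul, coeff_X_pow, mul_ite, mul_one,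
    mul_zero, sum_ite_eq, mem_range, Nat.lt_succ_iff]

theorem natDegree_weightedGeomSum {R : Type*} [Semiring R] [CharZero R] (m : ℕ) :
    (weightedGeomSum R m).natDegree = m :=
  natDegree_eq_of_le_of_coeff_ne_zero
    (natDegree_le_iff_coeff_eq_zero.mpr fun i hi => by
      rw [coeff_weightedGeomSum, if_neg hi.not_ge])
    (by rw [coeff_weightedGeomSum, if_pos le_rfl]; exact Nat.cast_add_one_ne_zero m)

theorem leadingCoeff_weightedGeomSum {R : Type*} [Semiring R] [CharZero R] (m : ℕ) :
    (weightedGeomSum R m).leadingCoeff = (m : R) + 1 := by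
  rw [leadingCoeff, natDegree_weightedGeomSum, coeff_weightedGeomSum, if_pos le_rfl]

theorem weightedGeomSum_ne_zero {R : Type*} [Semiring R] [CharZero R] (m : ℕ) :
    weightedGeomSum R m ≠ 0 := by
  rw [← leadingCoeff_ne_zero, leadingCoeff_weightedGeomSum]
  exact Nat.cast_add_one_ne_zero m

theorem eval_zero_weightedGeomSum {R : Type*} [Semiring R] (m : ℕ) :
    (weightedGeomSum R m).eval 0 = 1 := by
  rw [← coeff_zero_eq_eval_zero, coeff_weightedGeomSum, if_pos (Nat.zero_le m)]
  simp

theorem two_mul_eval_one_weightedGeomSum {R : Type*} [CommSemiring R] (m : ℕ) :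
    2 * (weightedGeomSum R m).eval 1 = ((m : R) + 1) * ((m : R) + 2) := by
  induction m with
  | zero => simp [weightedGeomSum]
  | succ m ih =>
    rw [weightedGeomSum, sum_range_succ, eval_add, mul_add, ← weightedGeomSum, ih, eval_C_mul,
      eval_pow, eval_X, one_pow, mul_one]
    push_cast
    ring

section IsDomain

variable {R : Type*} [CommRing R] [IsDomain R] [CharZero R] {m : ℕ}

theorem eval_derivative_weightedGeomSum_of_isRoot {x : R} (hx : (weightedGeomSum R m).IsRoot x) :
    (x - 1) * (derivative (weightedGeomSum R m)).eval x =
      ((m : R) + 1) * ((m : R) + 2) * x ^ m := by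
  have hx1 : x - 1 ≠ 0 := by
    intro h
    obtain rfl : x = 1 := sub_eq_zero.mp h
    have h1 := two_mul_eval_one_weightedGeomSum (R := R) m
    rw [hx.eq_zero, mul_zero] at h1
    exact (show ((m : R) + 1) * ((m : R) + 2) ≠ 0 by norm_cast) h1.symm
  have hder := congrArg (fun p => (derivative p).eval x)
    (X_sub_one_sq_mul_weightedGeomSum (R := R) m)
  simp only [derivative_mul, derivative_pow, derivative_sub, derivative_add, derivative_one,
    derivative_X, derivative_C, eval_add, eval_sub, eval_mul, eval_pow, eval_X, eval_C, eval_one,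
    eval_zero, hx.eq_zero] at hder
  apply mul_left_cancel₀ hx1
  push_cast at hder
  linear_combination hder

theorem nodup_roots_weightedGeomSum (m : ℕ) : (weightedGeomSum R m).roots.Nodup := by
  classical
  refine Multiset.nodup_iff_count_le_one.mpr fun x => ?_
  rw [count_roots, ← not_lt, one_lt_rootMultiplicity_iff_isRoot (weightedGeomSum_ne_zero m)]
  rintro ⟨hx, hdx⟩
  have h := eval_derivative_weightedGeomSum_of_isRoot hx
  rw [hdx.eq_zero, mul_zero, eq_comm] at h
  have hm : ((m : R) + 1) * ((m : R) + 2) ≠ 0 := by norm_cast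
  have hx0 : x = 0 := (pow_eq_zero_iff'.mp ((mul_eq_zero.mp h).resolve_left hm)).1
  rw [hx0, IsRoot, eval_zero_weightedGeomSum] at hx
  exact one_ne_zero hx

theorem mul_prod_eval_derivative_weightedGeomSum (r : Fin m → R)
    (hfac : weightedGeomSum R m = C ((m : R) + 1) * ∏ i, (X - C (r i))) :
    ((m : R) + 2) * ∏ i, (derivative (weightedGeomSum R m)).eval (r i) =
      2 * ((m : R) + 2) ^ m := by
  have heval : ∀ x, (weightedGeomSum R m).eval x = ((m : R) + 1) * ∏ i, (x - r i) := fun x => by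
    rw [hfac, eval_C_mul, eval_prod]
    simp
  have hroot : ∀ i, (weightedGeomSum R m).IsRoot (r i) := fun i => by
    rw [IsRoot, heval, prod_eq_zero (mem_univ i) (sub_self _), mul_zero]
  have hsq : ((-1 : R) ^ m) ^ 2 = 1 := by rw [← pow_mul, mul_comm, pow_mul, neg_one_sq, one_pow]
  have hzero : ((m : R) + 1) * ∏ i, r i = (-1) ^ m := by
    have h := heval 0
    simp only [eval_zero_weightedGeomSum, zero_sub, prod_neg, card_univ, Fintype.card_fin] at h
    linear_combination (-(-1) ^ m) * h - ((m : R) + 1) * (∏ i, r i) * hsq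
  have hone : 2 * (-1) ^ m * ∏ i, (r i - 1) = (m : R) + 2 := by
    have h := heval 1
    rw [prod_congr rfl fun i _ => (neg_sub (r i) 1).symm, prod_neg, card_univ,
      Fintype.card_fin] at h
    apply mul_left_cancel₀ (Nat.cast_add_one_ne_zero (R := R) m)
    linear_combination two_mul_eval_one_weightedGeomSum (R := R) m - 2 * h
  have hder : (∏ i, (r i - 1)) * ∏ i, (derivative (weightedGeomSum R m)).eval (r i) =
      ((m : R) + 2) ^ m * (((m : R) + 1) * ∏ i, r i) ^ m := by
    rw [← prod_mul_distrib,
      prod_congr rfl fun i _ => eval_derivative_weightedGeomSum_of_isRoot (hroot i),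
      prod_mul_distrib, prod_const, card_univ, Fintype.card_fin, prod_pow, mul_pow, mul_pow]
    ring
  calc ((m : R) + 2) * ∏ i, (derivative (weightedGeomSum R m)).eval (r i)
      = 2 * (-1) ^ m * ((m : R) + 2) ^ m * (((m : R) + 1) * ∏ i, r i) ^ m := by
        nth_rw 1 [← hone]
        rw [mul_assoc _ (∏ i, (r i - 1)), hder]
        ring
    _ = 2 * ((m : R) + 2) ^ m * ((-1) ^ m) ^ (m + 1) := by
        rw [hzero, pow_succ _ m]
        ring
    _ = 2 * ((m : R) + 2) ^ m := by
        rw [← pow_mul, (Nat.even_mul_succ_self m).neg_one_pow, mul_one]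

theorem weightedGeomSum_discr (r : Fin m → R)
    (hfac : weightedGeomSum R m = C ((m : R) + 1) * ∏ i, (X - C (r i))) :
    ((m : R) + 2) * ((m : R) + 1) ^ m *
        ((-1) ^ (m * (m - 1) / 2) * ∏ i, ∏ j ∈ Ioi i, (r i - r j) ^ 2) =
      2 * ((m : R) + 2) ^ m := by
  have h := mul_prod_eval_derivative_weightedGeomSum r hfac
  rw [hfac] at h
  simp_rw [eval_derivative_C_mul_prod_X_sub_C, prod_mul_distrib, prod_const, card_univ,
    Fintype.card_fin, prod_prod_erase_sub_eq_neg_one_pow_mul] at h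
  linear_combination h

end IsDomain

/-- Let `n ≥ 7` with `n ≡ 3 (mod 4)` and `g (X) = Σ_{i=0}^{n−2} (i+1) Xⁱ`
(degree `n − 2`, leading coefficient `n − 1`). Then `g` has `n − 2` distinct complex roots
`r 1, …, r (n−2)`, and its discriminant satisfies
`(n−1)^(2n−6) · ∏_{i<j} (r i − r j)² = 2 · n^(n−3) · (n−1)^(n−4)`. -/
theorem stmt13 (n : ℕ) (hn : 7 ≤ n) (hn3 : n % 4 = 3)
    (g : Polynomial ℂ) (hg : g = ∑ i ∈ range (n - 1), C ((i : ℂ) + 1) * X ^ i) :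
    ∃ r : Fin (n - 2) → ℂ, Function.Injective r ∧
      (∀ x : ℂ, g.IsRoot x ↔ ∃ i, r i = x) ∧
      ((n : ℂ) - 1) ^ (2 * n - 6) * (∏ i : Fin (n - 2), ∏ j ∈ Finset.Ioi i, (r i - r j) ^ 2) =
        2 * (n : ℂ) ^ (n - 3) * ((n : ℂ) - 1) ^ (n - 4) := by
  obtain ⟨k, rfl⟩ : ∃ k, n = 4 * k + 7 := ⟨(n - 7) / 4, by omega⟩
  rw [show 4 * k + 7 - 2 = 4 * k + 5 from rfl, show 2 * (4 * k + 7) - 6 = 8 * k + 8 by omega,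
    show 4 * k + 7 - 3 = 4 * k + 4 from rfl, show 4 * k + 7 - 4 = 4 * k + 3 from rfl]
  obtain rfl : g = weightedGeomSum ℂ (4 * k + 5) := hg
  obtain ⟨r, hr, hroots, hfac⟩ := exists_injective_fin_roots (weightedGeomSum_ne_zero (R := ℂ) _)
    (IsAlgClosed.splits _) (nodup_roots_weightedGeomSum _) (natDegree_weightedGeomSum (4 * k + 5))
  rw [leadingCoeff_weightedGeomSum] at hfac
  have hsign : Even ((4 * k + 5) * (4 * k + 5 - 1) / 2) := ⟨(4 * k + 5) * (k + 1),
    Nat.div_eq_of_eq_mul_left two_pos (by rw [show 4 * k + 5 - 1 = 4 * k + 4 from rfl]; ring)⟩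
  have hdiscr := weightedGeomSum_discr r hfac
  rw [hsign.neg_one_pow, one_mul] at hdiscr
  refine ⟨r, hr, hroots, ?_⟩
  push_cast at hdiscr ⊢
  apply mul_left_cancel₀ (show (4 * (k : ℂ) + 7) ≠ 0 by norm_cast)
  linear_combination (4 * (k : ℂ) + 6) ^ (4 * k + 3) * hdiscr
end

section
/- Let n ≥ 3 be an odd integer and let c be a real number with c > (n−1)^{n−1}/n^n. Then the real polynomial X^{n−1}(X−1) + c has exactly one real root, and this root is negative. -/
/-!
On `x ≤ 0` the map `x ↦ x ^ m * (x - 1)` (with `m = n - 1` even) is strictly increasing, so it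
takes the value `-c` at most once there, and it does take it by the intermediate value theorem.
On `x ≥ 0` the weighted AM-GM inequality `(m + 1) a u ^ m ≤ m u ^ (m + 1) + a ^ (m + 1)`, applied
with `a = m` and `u = (m + 1) x`, bounds it below by its value `-m ^ m / (m + 1) ^ (m + 1)` at
`x = m / (m + 1)`, so there it never reaches `-c`.
-/

open Set

lemma sub_mul_pow_sub_pow_nonneg {a u : ℝ} (ha : 0 ≤ a) (hu : 0 ≤ u) (k : ℕ) :
    0 ≤ (u - a) * (u ^ k - a ^ k) := by
  rcases le_total u a with h | h
  · exact mul_nonneg_of_nonpos_of_nonpos (sub_nonpos.mpr h)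
      (sub_nonpos.mpr (pow_le_pow_left₀ hu h k))
  · exact mul_nonneg (sub_nonneg.mpr h) (sub_nonneg.mpr (pow_le_pow_left₀ ha h k))

lemma add_one_mul_mul_pow_le (m : ℕ) {a u : ℝ} (ha : 0 ≤ a) (hu : 0 ≤ u) :
    (m + 1) * a * u ^ m ≤ m * u ^ (m + 1) + a ^ (m + 1) := by
  induction m with
  | zero => simp
  | succ k ih =>
    have hstep := mul_le_mul_of_nonneg_left ih hu
    have hrearr := sub_mul_pow_sub_pow_nonneg ha hu (k + 1)
    push_cast
    linear_combination hstep + hrearr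

lemma neg_div_le_pow_mul_sub_one {m : ℕ} (hm : 0 < m) {x : ℝ} (hx : 0 ≤ x) :
    -((m : ℝ) ^ m / ((m : ℝ) + 1) ^ (m + 1)) ≤ x ^ m * (x - 1) := by
  have hm' : (0 : ℝ) < m := Nat.cast_pos.mpr hm
  have hamgm := add_one_mul_mul_pow_le m hm'.le (by positivity : 0 ≤ ((m : ℝ) + 1) * x)
  have hbound : ((m : ℝ) + 1) ^ (m + 1) * (x ^ m * (1 - x)) ≤ (m : ℝ) ^ m := by
    rw [mul_pow, mul_pow] at hamgm
    refine le_of_mul_le_mul_left ?_ hm'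
    linear_combination hamgm
  rw [neg_le, le_div_iff₀ (by positivity)]
  linear_combination hbound

lemma strictMonoOn_pow_mul_sub_one {m : ℕ} (hm : Even m) :
    StrictMonoOn (fun x : ℝ ↦ x ^ m * (x - 1)) (Iic 0) := by
  intro x _ y hy hxy
  have hy1 : y - 1 < 0 := by linarith [mem_Iic.mp hy]
  have hpow : y ^ m ≤ x ^ m := by
    rw [← hm.pow_abs x, ← hm.pow_abs y]
    exact pow_le_pow_left₀ (abs_nonneg y)
      (abs_le_abs_of_nonpos (mem_Iic.mp hy) hxy.le) m
  calc x ^ m * (x - 1)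
      < x ^ m * (y - 1) :=
        mul_lt_mul_of_pos_left (by linarith) (hm.pow_pos (hxy.trans_le hy).ne)
    _ ≤ y ^ m * (y - 1) := mul_le_mul_of_nonpos_right hpow hy1.le

lemma exists_pow_mul_sub_one_add_eq_zero {m : ℕ} (hm : Even m) (c : ℝ) :
    ∃ x : ℝ, x ^ m * (x - 1) + c = 0 := by
  set R := |c| + 1
  have hR : 1 ≤ R := le_add_of_nonneg_left (abs_nonneg c)
  have hRm : 1 ≤ (-R) ^ m := by
    rw [hm.neg_pow]
    exact one_le_pow₀ hR
  have hleft : (-R) ^ m * (-R - 1) + c ≤ 0 := by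
    linarith [mul_le_mul_of_nonneg_right hRm (by linarith : 0 ≤ R + 1), le_abs_self c]
  have hright : 0 ≤ R ^ m * (R - 1) + c := by
    linarith [le_mul_of_one_le_left (by linarith : 0 ≤ R - 1) (one_le_pow₀ (n := m) hR),
      neg_abs_le c]
  have hcont : Continuous fun x : ℝ ↦ x ^ m * (x - 1) + c := by fun_prop
  obtain ⟨x, -, hx⟩ := intermediate_value_Icc (by linarith) hcont.continuousOn ⟨hleft, hright⟩
  exact ⟨x, hx⟩

/-- Let `n ≥ 3` be odd and `c : ℝ` with `c > (n−1)^(n−1) / n^n`. Then the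
real polynomial `X^(n−1) (X−1) + c` has exactly one real root, and this root is negative. -/
theorem stmt15 (n : ℕ) (hn : 3 ≤ n) (hodd : Odd n) (c : ℝ)
    (hc : ((n : ℝ) - 1) ^ (n - 1) / (n : ℝ) ^ n < c) :
    (∃! x : ℝ, x ^ (n - 1) * (x - 1) + c = 0) ∧
      ∀ x : ℝ, x ^ (n - 1) * (x - 1) + c = 0 → x < 0 := by
  obtain ⟨m, rfl⟩ : ∃ m, n = m + 1 := ⟨n - 1, by omega⟩
  have hm : Even m := by simpa [Nat.odd_add_one] using hodd
  simp only [Nat.add_sub_cancel]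
  push_cast at hc
  rw [add_sub_cancel_right] at hc
  have hneg : ∀ x : ℝ, x ^ m * (x - 1) + c = 0 → x < 0 := fun x hx ↦
    not_le.mp fun hx0 ↦ by linarith [neg_div_le_pow_mul_sub_one (by omega : 0 < m) hx0]
  obtain ⟨r, hr⟩ := exists_pow_mul_sub_one_add_eq_zero hm c
  refine ⟨⟨r, hr, fun y hy ↦ ?_⟩, hneg⟩
  exact (strictMonoOn_pow_mul_sub_one hm).injOn (hneg y hy).le (hneg r hr).le (by linarith)
end

section
/- Let g(X) = X^6 + 53X^4 − 5940X^2 + 62208 and h(X) = X(3X^4 − 172X^2 + 1600), as polynomials with rational coefficients. Then the set of γ ∈ ℚ for which the degree-6 polynomial g(X) − γ·h(X) has a repeated root in ℂ is exactly the ten-element set {7, −7, 79/8, −79/8, 189/22, −189/22, 918/59, −918/59, 1733/250, −1733/250}; moreover, for each such γ, the polynomial g(X) − γ·h(X) has exactly one repeated complex root, this root is rational, and its multiplicity is exactly 2. -/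
open Polynomial

set_option maxHeartbeats 2000000

private lemma le_one_of_bezout (q a b : ℚ[X]) (e : ℚ) (he : e ≠ 0)
    (hab : a * q + b * derivative q = C e) (z : ℂ) :
    (q.map (algebraMap ℚ ℂ)).rootMultiplicity z ≤ 1 := by
  have hq : q ≠ 0 := by
    rintro rfl
    rw [derivative_zero, mul_zero, mul_zero, add_zero] at hab
    exact he (Polynomial.C_eq_zero.mp hab.symm)
  have he' : ((e : ℂ)) ≠ 0 := Rat.cast_ne_zero.mpr he
  have h2c := congrArg (Polynomial.map (algebraMap ℚ ℂ)) hab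
  simp only [Polynomial.map_add, Polynomial.map_mul, Polynomial.map_C, eq_ratCast] at h2c
  have hco : IsCoprime (q.map (algebraMap ℚ ℂ)) ((derivative q).map (algebraMap ℚ ℂ)) := by
    refine ⟨C ((e : ℂ))⁻¹ * a.map (algebraMap ℚ ℂ), C ((e : ℂ))⁻¹ * b.map (algebraMap ℚ ℂ), ?_⟩
    calc C ((e : ℂ))⁻¹ * a.map (algebraMap ℚ ℂ) * q.map (algebraMap ℚ ℂ)
          + C ((e : ℂ))⁻¹ * b.map (algebraMap ℚ ℂ) * (derivative q).map (algebraMap ℚ ℂ)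
        = C ((e : ℂ))⁻¹ * (a.map (algebraMap ℚ ℂ) * q.map (algebraMap ℚ ℂ)
            + b.map (algebraMap ℚ ℂ) * (derivative q).map (algebraMap ℚ ℂ)) := by ring
      _ = C ((e : ℂ))⁻¹ * C ((e : ℂ)) := by rw [h2c]
      _ = 1 := by rw [← C_mul, inv_mul_cancel₀ he', C_1]
  by_contra hgt
  push_neg at hgt
  have h2 : 2 ≤ (q.map (algebraMap ℚ ℂ)).rootMultiplicity z := hgt
  rw [Polynomial.le_rootMultiplicity_iff (Polynomial.map_ne_zero hq)] at h2
  obtain ⟨s, hs⟩ := h2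
  have d1 : (X - C z) ∣ q.map (algebraMap ℚ ℂ) := ⟨(X - C z) * s, by rw [hs]; ring⟩
  have d2 : (X - C z) ∣ (derivative q).map (algebraMap ℚ ℂ) := by
    rw [← Polynomial.derivative_map, hs]
    refine ⟨2 * s + (X - C z) * derivative s, ?_⟩
    simp only [derivative_mul, derivative_pow, derivative_sub, derivative_X, derivative_C,
      Nat.cast_ofNat, sub_zero, mul_one, pow_one, map_ofNat]
    ring
  exact Polynomial.not_isUnit_X_sub_C z (hco.isUnit_of_dvd' d1 d2)

private lemma case_lemma (p q : ℚ[X]) (r n : ℚ) (hn : n ≠ 0)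
    (hpq : C n * p = (X - C r) ^ 2 * q) (hq0 : q.eval r ≠ 0)
    (hq1 : ∀ z : ℂ, (q.map (algebraMap ℚ ℂ)).rootMultiplicity z ≤ 1) :
    (∃! z : ℂ, 2 ≤ (p.map (algebraMap ℚ ℂ)).rootMultiplicity z) ∧
      ∀ z : ℂ, 2 ≤ (p.map (algebraMap ℚ ℂ)).rootMultiplicity z →
        (∃ η : ℚ, (η : ℂ) = z) ∧ (p.map (algebraMap ℚ ℂ)).rootMultiplicity z = 2 := by
  have hq : q ≠ 0 := fun h => hq0 (by simp [h])
  have hp : p ≠ 0 := by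
    rintro rfl
    rw [mul_zero] at hpq
    exact hq ((mul_eq_zero.mp hpq.symm).resolve_left
      (pow_ne_zero _ (Polynomial.X_sub_C_ne_zero r)))
  have hmq : q.map (algebraMap ℚ ℂ) ≠ 0 := Polynomial.map_ne_zero hq
  have hmp : p.map (algebraMap ℚ ℂ) ≠ 0 := Polynomial.map_ne_zero hp
  have hn' : ((n : ℂ)) ≠ 0 := Rat.cast_ne_zero.mpr hn
  have hmap : C ((n : ℂ)) * p.map (algebraMap ℚ ℂ)
      = (X - C ((r : ℂ))) ^ 2 * q.map (algebraMap ℚ ℂ) := by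
    have := congrArg (Polynomial.map (algebraMap ℚ ℂ)) hpq
    simpa only [Polynomial.map_mul, Polynomial.map_pow, Polynomial.map_sub, Polynomial.map_C,
      Polynomial.map_X, eq_ratCast] using this
  have key : ∀ z : ℂ, (p.map (algebraMap ℚ ℂ)).rootMultiplicity z
      = ((X - C ((r : ℂ))) ^ 2).rootMultiplicity z + (q.map (algebraMap ℚ ℂ)).rootMultiplicity z := by
    intro z
    have h1 : rootMultiplicity z (C ((n : ℂ)) * p.map (algebraMap ℚ ℂ))
        = rootMultiplicity z (C ((n : ℂ))) + rootMultiplicity z (p.map (algebraMap ℚ ℂ)) :=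
      Polynomial.rootMultiplicity_mul (mul_ne_zero (by simpa using hn') hmp)
    have h2 : rootMultiplicity z ((X - C ((r : ℂ))) ^ 2 * q.map (algebraMap ℚ ℂ))
        = rootMultiplicity z ((X - C ((r : ℂ))) ^ 2)
          + rootMultiplicity z (q.map (algebraMap ℚ ℂ)) :=
      Polynomial.rootMultiplicity_mul
        (mul_ne_zero (pow_ne_zero _ (Polynomial.X_sub_C_ne_zero _)) hmq)
    have h0 : rootMultiplicity z (C ((n : ℂ))) = 0 :=
      Polynomial.rootMultiplicity_eq_zero (by simp [Polynomial.IsRoot, hn'])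
    rw [hmap, h2] at h1
    omega
  have heval : (q.map (algebraMap ℚ ℂ)).eval ((r : ℂ)) = ((q.eval r : ℚ) : ℂ) := by
    rw [← eq_ratCast (algebraMap ℚ ℂ) r, Polynomial.eval_map, Polynomial.eval₂_hom, eq_ratCast]
  have hmqr : (q.map (algebraMap ℚ ℂ)).rootMultiplicity ((r : ℂ)) = 0 :=
    Polynomial.rootMultiplicity_eq_zero
      (by simp only [Polynomial.IsRoot, heval]; exact_mod_cast hq0)
  have hr2 : (p.map (algebraMap ℚ ℂ)).rootMultiplicity ((r : ℂ)) = 2 := by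
    rw [key, hmqr, Polynomial.rootMultiplicity_X_sub_C_pow]
  have huniq : ∀ z : ℂ, 2 ≤ (p.map (algebraMap ℚ ℂ)).rootMultiplicity z → z = ((r : ℂ)) := by
    intro z hz
    by_contra hne
    have h0 : ((X - C ((r : ℂ))) ^ 2).rootMultiplicity z = 0 :=
      Polynomial.rootMultiplicity_eq_zero
        (by simp [Polynomial.IsRoot, sub_eq_zero, hne])
    have := hq1 z
    rw [key, h0] at hz
    omega
  refine ⟨⟨(r : ℂ), hr2.ge, huniq⟩, fun z hz => ⟨⟨r, (huniq z hz).symm⟩, by rw [huniq z hz, hr2]⟩⟩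

private lemma gen_bezout (γ : ℚ) :
    (-C 2730620377724850307872 + C 222289114290995174472 * C γ ^ 2 - C 6670307973002062752 * C γ ^ 4 + C 87842378519582592 * C γ ^ 6 - C 430561849677312 * C γ ^ 8 + C 232694012936375015760 * C γ * X - C 10515606529578218580 * C γ ^ 3 * X + C 110403713877310560 * C γ ^ 5 * X + C 791586180676800 * C γ ^ 7 * X - C 13161744921600 * C γ ^ 9 * X + C 143983375096986366480 * X ^ 2 - C 11428897936818868772 * C γ ^ 2 * X ^ 2 + C 334315637286281416 * C γ ^ 4 * X ^ 2 - C 4350108840340352 * C γ ^ 6 * X ^ 2 + C 21747583601280 * C γ ^ 8 * X ^ 2 - C 4697107603550529804 * C γ * X ^ 3 + C 180060113750495235 * C γ ^ 3 * X ^ 3 - C 469273247578488 * C γ ^ 5 * X ^ 3 - C 48750072878352 * C γ ^ 7 * X ^ 3 + C 476064864000 * C γ ^ 9 * X ^ 3 + C 2732992053851409336 * X ^ 4 - C 116080820416620654 * C γ ^ 2 * X ^ 4 + C 963272177369904 * C γ ^ 4 * X ^ 4 + C 14738121699744 * C γ ^ 6 * X ^ 4 - C 190425945600 * C γ ^ 8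 * X ^ 4) * (X ^ 6 + C 53 * X ^ 4 - C 5940 * X ^ 2 + C 62208 - C γ * (X * (C 3 * X ^ 4 - C 172 * X ^ 2 + C 1600)))
      + (C 1300808633296959029376 * C γ - C 66817456681604171808 * C γ ^ 3 + C 1056493065301238016 * C γ ^ 5 - C 3530144268403200 * C γ ^ 7 - C 25878589440000 * C γ ^ 9 + C 2119259498461190127504 * X - C 135016280300085337188 * C γ ^ 2 * X + C 3118343358690205056 * C γ ^ 4 * X - C 30854186621974848 * C γ ^ 6 * X + C 110981733717504 * C γ ^ 8 * X - C 80291236058809303248 * C γ * X ^ 2 + C 3574987638946880052 * C γ ^ 3 * X ^ 2 - C 35839426615881312 * C γ ^ 5 * X ^ 2 - C 310090162744512 * C γ ^ 7 * X ^ 2 + C 4815899827200 * C γ ^ 9 * X ^ 2 - C 32044372452504655236 * X ^ 3 + C 2424557560508582849 * C γ ^ 2 * X ^ 3 - C 67734069066446320 * C γ ^ 4 * X ^ 3 + C 843198159150224 * C γ ^ 6 * X ^ 3 - C 4055962701696 * C γ ^ 8 * X ^ 3 + C 1010600605079372412 * C γ * X ^ 4 - C 39683420659800927 * C γ ^ 3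 * X ^ 4 + C 158484889377240 * C γ ^ 5 * X ^ 4 + C 9353188954704 * C γ ^ 7 * X ^ 4 - C 95212972800 * C γ ^ 9 * X ^ 4 - C 455498675641901556 * X ^ 5 + C 19346803402770109 * C γ ^ 2 * X ^ 5 - C 160545362894984 * C γ ^ 4 * X ^ 5 - C 2456353616624 * C γ ^ 6 * X ^ 5 + C 31737657600 * C γ ^ 8 * X ^ 5) * derivative (X ^ 6 + C 53 * X ^ 4 - C 5940 * X ^ 2 + C 62208 - C γ * (X * (C 3 * X ^ 4 - C 172 * X ^ 2 + C 1600)))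
      = C (6144 * (γ - 7) * (γ + 7) * (8 * γ - 79) * (8 * γ + 79) * (22 * γ - 189) * (22 * γ + 189) * (59 * γ - 918) * (59 * γ + 918) * (250 * γ - 1733) * (250 * γ + 1733) : ℚ) := by
  have hd : derivative (X ^ 6 + C 53 * X ^ 4 - C 5940 * X ^ 2 + C 62208 - C γ * (X * (C 3 * X ^ 4 - C 172 * X ^ 2 + C 1600))) = (C 6 * X ^ 5 + C 212 * X ^ 3 - C 11880 * X - C γ * (C 15 * X ^ 4 - C 516 * X ^ 2 + C 1600)) := by
    simp only [derivative_sub, derivative_add, derivative_mul, derivative_X_pow, derivative_X,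
      derivative_C, Nat.cast_ofNat, derivative_one]
    simp only [map_ofNat, map_one, map_neg, map_mul, map_add, map_sub, map_pow, Polynomial.C_0, Polynomial.C_1]
    ring
  rw [hd]
  simp only [map_ofNat, map_one, map_neg, map_mul, map_add, map_sub, map_pow, Polynomial.C_0, Polynomial.C_1]
  ring

/-- With `g (X) = X^6 + 53 X^4 − 5940 X^2 + 62208` and
`h (X) = X (3 X^4 − 172 X^2 + 1600)` in `ℚ[X]`, the set of `γ ∈ ℚ` for which
`g (X) − γ h (X)` has a repeated complex root is exactly
`{±7, ±79/8, ±189/22, ±918/59, ±1733/250}`; moreover, for each such `γ` the polynomial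
`g (X) − γ h (X)` has exactly one repeated complex root, this root is rational, and its
multiplicity is exactly 2. -/
theorem stmt19 (g h : Polynomial ℚ)
    (hg : g = X ^ 6 + C 53 * X ^ 4 - C 5940 * X ^ 2 + C 62208)
    (hh : h = X * (C 3 * X ^ 4 - C 172 * X ^ 2 + C 1600)) :
    {γ : ℚ | ∃ z : ℂ, 2 ≤ ((g - C γ * h).map (algebraMap ℚ ℂ)).rootMultiplicity z} =
      {7, -7, 79/8, -79/8, 189/22, -189/22, 918/59, -918/59, 1733/250, -1733/250} ∧
    ∀ γ ∈ ({7, -7, 79/8, -79/8, 189/22, -189/22, 918/59, -918/59, 1733/250, -1733/250} :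
        Set ℚ),
      (∃! z : ℂ, 2 ≤ ((g - C γ * h).map (algebraMap ℚ ℂ)).rootMultiplicity z) ∧
      ∀ z : ℂ, 2 ≤ ((g - C γ * h).map (algebraMap ℚ ℂ)).rootMultiplicity z →
        (∃ η : ℚ, (η : ℂ) = z) ∧
        ((g - C γ * h).map (algebraMap ℚ ℂ)).rootMultiplicity z = 2 := by
  subst hg hh
  have case0 : (∃! z : ℂ, 2 ≤ (((X ^ 6 + C 53 * X ^ 4 - C 5940 * X ^ 2 + C 62208 - C (7) * (X * (C 3 * X ^ 4 - C 172 * X ^ 2 + C 1600)) : ℚ[X])).map (algebraMap ℚ ℂ)).rootMultiplicity z) ∧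
      ∀ z : ℂ, 2 ≤ (((X ^ 6 + C 53 * X ^ 4 - C 5940 * X ^ 2 + C 62208 - C (7) * (X * (C 3 * X ^ 4 - C 172 * X ^ 2 + C 1600)) : ℚ[X])).map (algebraMap ℚ ℂ)).rootMultiplicity z →
        (∃ η : ℚ, (η : ℂ) = z) ∧ (((X ^ 6 + C 53 * X ^ 4 - C 5940 * X ^ 2 + C 62208 - C (7) * (X * (C 3 * X ^ 4 - C 172 * X ^ 2 + C 1600)) : ℚ[X])).map (algebraMap ℚ ℂ)).rootMultiplicity z = 2 := by
    have hfac : C ((1:ℚ)) * (X ^ 6 + C 53 * X ^ 4 - C 5940 * X ^ 2 + C 62208 - C (7) * (X * (C 3 * X ^ 4 - C 172 * X ^ 2 + C 1600)))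
        = (X - C (8)) ^ 2 * (C 972 + C 68 * X - C 91 * X ^ 2 - C 5 * X ^ 3 + C 1 * X ^ 4) := by
      simp only [map_ofNat, map_one, map_neg, map_mul, map_add, map_sub, map_pow, Polynomial.C_0, Polynomial.C_1]
      ring
    have hq0 : ((C 972 + C 68 * X - C 91 * X ^ 2 - C 5 * X ^ 3 + C 1 * X ^ 4 : ℚ[X])).eval (8 : ℚ) ≠ 0 := by
      simp only [eval_add, eval_sub, eval_mul, eval_pow, eval_X, eval_C]
      norm_num
    have hdq : derivative ((C 972 + C 68 * X - C 91 * X ^ 2 - C 5 * X ^ 3 + C 1 * X ^ 4 : ℚ[X])) = (C 68 - C 182 * X - C 15 * X ^ 2 + C 4 * X ^ 3) := by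
      simp only [derivative_add, derivative_sub, derivative_mul, derivative_X_pow, derivative_X,
        derivative_C, Nat.cast_ofNat, derivative_one]
      simp only [map_ofNat, map_one, map_neg, map_mul, map_add, map_sub, map_pow, Polynomial.C_0, Polynomial.C_1]
      ring
    have hab : ((C 3860666 + C 1420829 * X - C 232652 * X ^ 2 : ℚ[X])) * (C 972 + C 68 * X - C 91 * X ^ 2 - C 5 * X ^ 3 + C 1 * X ^ 4) + (C 7745256 - C 3440213 * X - C 427911 * X ^ 2 + C 58163 * X ^ 3) * derivative (C 972 + C 68 * X - C 91 * X ^ 2 - C 5 * X ^ 3 + C 1 * X ^ 4) = C ((4279244760 : ℚ)) := by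
      rw [hdq]
      simp only [map_ofNat, map_one, map_neg, map_mul, map_add, map_sub, map_pow, Polynomial.C_0, Polynomial.C_1]
      ring
    exact case_lemma _ _ (8) (1) (by norm_num) hfac hq0
      (fun z => le_one_of_bezout _ _ _ _ (by norm_num) hab z)
  have case1 : (∃! z : ℂ, 2 ≤ (((X ^ 6 + C 53 * X ^ 4 - C 5940 * X ^ 2 + C 62208 - C ((-7)) * (X * (C 3 * X ^ 4 - C 172 * X ^ 2 + C 1600)) : ℚ[X])).map (algebraMap ℚ ℂ)).rootMultiplicity z) ∧
      ∀ z : ℂ, 2 ≤ (((X ^ 6 + C 53 * X ^ 4 - C 5940 * X ^ 2 + C 62208 - C ((-7)) * (X * (C 3 * X ^ 4 - C 172 * X ^ 2 + C 1600)) : ℚ[X])).map (algebraMap ℚ ℂ)).rootMultiplicity z →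
        (∃ η : ℚ, (η : ℂ) = z) ∧ (((X ^ 6 + C 53 * X ^ 4 - C 5940 * X ^ 2 + C 62208 - C ((-7)) * (X * (C 3 * X ^ 4 - C 172 * X ^ 2 + C 1600)) : ℚ[X])).map (algebraMap ℚ ℂ)).rootMultiplicity z = 2 := by
    have hfac : C ((1:ℚ)) * (X ^ 6 + C 53 * X ^ 4 - C 5940 * X ^ 2 + C 62208 - C ((-7)) * (X * (C 3 * X ^ 4 - C 172 * X ^ 2 + C 1600)))
        = (X - C ((-8))) ^ 2 * (C 972 - C 68 * X - C 91 * X ^ 2 + C 5 * X ^ 3 + C 1 * X ^ 4) := by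
      simp only [map_ofNat, map_one, map_neg, map_mul, map_add, map_sub, map_pow, Polynomial.C_0, Polynomial.C_1]
      ring
    have hq0 : ((C 972 - C 68 * X - C 91 * X ^ 2 + C 5 * X ^ 3 + C 1 * X ^ 4 : ℚ[X])).eval ((-8) : ℚ) ≠ 0 := by
      simp only [eval_add, eval_sub, eval_mul, eval_pow, eval_X, eval_C]
      norm_num
    have hdq : derivative ((C 972 - C 68 * X - C 91 * X ^ 2 + C 5 * X ^ 3 + C 1 * X ^ 4 : ℚ[X])) = (-C 68 - C 182 * X + C 15 * X ^ 2 + C 4 * X ^ 3) := by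
      simp only [derivative_add, derivative_sub, derivative_mul, derivative_X_pow, derivative_X,
        derivative_C, Nat.cast_ofNat, derivative_one]
      simp only [map_ofNat, map_one, map_neg, map_mul, map_add, map_sub, map_pow, Polynomial.C_0, Polynomial.C_1]
      ring
    have hab : ((C 3860666 - C 1420829 * X - C 232652 * X ^ 2 : ℚ[X])) * (C 972 - C 68 * X - C 91 * X ^ 2 + C 5 * X ^ 3 + C 1 * X ^ 4) + (-C 7745256 - C 3440213 * X + C 427911 * X ^ 2 + C 58163 * X ^ 3) * derivative (C 972 - C 68 * X - C 91 * X ^ 2 + C 5 * X ^ 3 + C 1 * X ^ 4) = C ((4279244760 : ℚ)) := by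
      rw [hdq]
      simp only [map_ofNat, map_one, map_neg, map_mul, map_add, map_sub, map_pow, Polynomial.C_0, Polynomial.C_1]
      ring
    exact case_lemma _ _ ((-8)) (1) (by norm_num) hfac hq0
      (fun z => le_one_of_bezout _ _ _ _ (by norm_num) hab z)
  have case2 : (∃! z : ℂ, 2 ≤ (((X ^ 6 + C 53 * X ^ 4 - C 5940 * X ^ 2 + C 62208 - C ((79 / 8)) * (X * (C 3 * X ^ 4 - C 172 * X ^ 2 + C 1600)) : ℚ[X])).map (algebraMap ℚ ℂ)).rootMultiplicity z) ∧
      ∀ z : ℂ, 2 ≤ (((X ^ 6 + C 53 * X ^ 4 - C 5940 * X ^ 2 + C 62208 - C ((79 / 8)) * (X * (C 3 * X ^ 4 - C 172 * X ^ 2 + C 1600)) : ℚ[X])).map (algebraMap ℚ ℂ)).rootMultiplicity z →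
        (∃ η : ℚ, (η : ℂ) = z) ∧ (((X ^ 6 + C 53 * X ^ 4 - C 5940 * X ^ 2 + C 62208 - C ((79 / 8)) * (X * (C 3 * X ^ 4 - C 172 * X ^ 2 + C 1600)) : ℚ[X])).map (algebraMap ℚ ℂ)).rootMultiplicity z = 2 := by
    have hC : (C (8 : ℚ) : ℚ[X]) * C ((79 / 8) : ℚ) = C (79 : ℚ) := by
      rw [← C_mul]; norm_num
    have hfac : C ((8:ℚ)) * (X ^ 6 + C 53 * X ^ 4 - C 5940 * X ^ 2 + C 62208 - C ((79 / 8)) * (X * (C 3 * X ^ 4 - C 172 * X ^ 2 + C 1600)))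
        = (X - C (4)) ^ 2 * (C 31104 + C 7652 * X - C 1088 * X ^ 2 - C 173 * X ^ 3 + C 8 * X ^ 4) := by
      have h2 := hC
      simp only [map_ofNat, map_one, map_neg, map_mul, map_add, map_sub, map_pow, Polynomial.C_0, Polynomial.C_1] at h2 ⊢
      linear_combination (-(X * (3 * X ^ 4 - 172 * X ^ 2 + 1600))) * h2
    have hq0 : ((C 31104 + C 7652 * X - C 1088 * X ^ 2 - C 173 * X ^ 3 + C 8 * X ^ 4 : ℚ[X])).eval (4 : ℚ) ≠ 0 := by
      simp only [eval_add, eval_sub, eval_mul, eval_pow, eval_X, eval_C]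
      norm_num
    have hdq : derivative ((C 31104 + C 7652 * X - C 1088 * X ^ 2 - C 173 * X ^ 3 + C 8 * X ^ 4 : ℚ[X])) = (C 7652 - C 2176 * X - C 519 * X ^ 2 + C 32 * X ^ 3) := by
      simp only [derivative_add, derivative_sub, derivative_mul, derivative_X_pow, derivative_X,
        derivative_C, Nat.cast_ofNat, derivative_one]
      simp only [map_ofNat, map_one, map_neg, map_mul, map_add, map_sub, map_pow, Polynomial.C_0, Polynomial.C_1]
      ring
    have hab : ((-C 21854237149984 + C 32990084264785 * X - C 1680187112672 * X ^ 2 : ℚ[X])) * (C 31104 + C 7652 * X - C 1088 * X ^ 2 - C 173 * X ^ 3 + C 8 * X ^ 4) + (C 340761016387368 - C 15342261714752 * X - C 10518398960667 * X ^ 2 + C 420046778168 * X ^ 3) * derivative (C 31104 + C 7652 * X - C 1088 * X ^ 2 - C 173 * X ^ 3 + C 8 * X ^ 4) = C ((1927749105083037600 : ℚ)) := by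
      rw [hdq]
      simp only [map_ofNat, map_one, map_neg, map_mul, map_add, map_sub, map_pow, Polynomial.C_0, Polynomial.C_1]
      ring
    exact case_lemma _ _ (4) (8) (by norm_num) hfac hq0
      (fun z => le_one_of_bezout _ _ _ _ (by norm_num) hab z)
  have case3 : (∃! z : ℂ, 2 ≤ (((X ^ 6 + C 53 * X ^ 4 - C 5940 * X ^ 2 + C 62208 - C ((-79 / 8)) * (X * (C 3 * X ^ 4 - C 172 * X ^ 2 + C 1600)) : ℚ[X])).map (algebraMap ℚ ℂ)).rootMultiplicity z) ∧
      ∀ z : ℂ, 2 ≤ (((X ^ 6 + C 53 * X ^ 4 - C 5940 * X ^ 2 + C 62208 - C ((-79 / 8)) * (X * (C 3 * X ^ 4 - C 172 * X ^ 2 + C 1600)) : ℚ[X])).map (algebraMap ℚ ℂ)).rootMultiplicity z →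
        (∃ η : ℚ, (η : ℂ) = z) ∧ (((X ^ 6 + C 53 * X ^ 4 - C 5940 * X ^ 2 + C 62208 - C ((-79 / 8)) * (X * (C 3 * X ^ 4 - C 172 * X ^ 2 + C 1600)) : ℚ[X])).map (algebraMap ℚ ℂ)).rootMultiplicity z = 2 := by
    have hC : (C (8 : ℚ) : ℚ[X]) * C ((-79 / 8) : ℚ) = C ((-79) : ℚ) := by
      rw [← C_mul]; norm_num
    have hfac : C ((8:ℚ)) * (X ^ 6 + C 53 * X ^ 4 - C 5940 * X ^ 2 + C 62208 - C ((-79 / 8)) * (X * (C 3 * X ^ 4 - C 172 * X ^ 2 + C 1600)))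
        = (X - C ((-4))) ^ 2 * (C 31104 - C 7652 * X - C 1088 * X ^ 2 + C 173 * X ^ 3 + C 8 * X ^ 4) := by
      have h2 := hC
      simp only [map_ofNat, map_one, map_neg, map_mul, map_add, map_sub, map_pow, Polynomial.C_0, Polynomial.C_1] at h2 ⊢
      linear_combination (-(X * (3 * X ^ 4 - 172 * X ^ 2 + 1600))) * h2
    have hq0 : ((C 31104 - C 7652 * X - C 1088 * X ^ 2 + C 173 * X ^ 3 + C 8 * X ^ 4 : ℚ[X])).eval ((-4) : ℚ) ≠ 0 := by
      simp only [eval_add, eval_sub, eval_mul, eval_pow, eval_X, eval_C]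
      norm_num
    have hdq : derivative ((C 31104 - C 7652 * X - C 1088 * X ^ 2 + C 173 * X ^ 3 + C 8 * X ^ 4 : ℚ[X])) = (-C 7652 - C 2176 * X + C 519 * X ^ 2 + C 32 * X ^ 3) := by
      simp only [derivative_add, derivative_sub, derivative_mul, derivative_X_pow, derivative_X,
        derivative_C, Nat.cast_ofNat, derivative_one]
      simp only [map_ofNat, map_one, map_neg, map_mul, map_add, map_sub, map_pow, Polynomial.C_0, Polynomial.C_1]
      ring
    have hab : ((-C 21854237149984 - C 32990084264785 * X - C 1680187112672 * X ^ 2 : ℚ[X])) * (C 31104 - C 7652 * X - C 1088 * X ^ 2 + C 173 * X ^ 3 + C 8 * X ^ 4) + (-C 340761016387368 - C 15342261714752 * X + C 10518398960667 * X ^ 2 + C 420046778168 * X ^ 3) * derivative (C 31104 - C 7652 * X - C 1088 * X ^ 2 + C 173 * X ^ 3 + C 8 * X ^ 4) = C ((1927749105083037600 : ℚ)) := by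
      rw [hdq]
      simp only [map_ofNat, map_one, map_neg, map_mul, map_add, map_sub, map_pow, Polynomial.C_0, Polynomial.C_1]
      ring
    exact case_lemma _ _ ((-4)) (8) (by norm_num) hfac hq0
      (fun z => le_one_of_bezout _ _ _ _ (by norm_num) hab z)
  have case4 : (∃! z : ℂ, 2 ≤ (((X ^ 6 + C 53 * X ^ 4 - C 5940 * X ^ 2 + C 62208 - C ((189 / 22)) * (X * (C 3 * X ^ 4 - C 172 * X ^ 2 + C 1600)) : ℚ[X])).map (algebraMap ℚ ℂ)).rootMultiplicity z) ∧
      ∀ z : ℂ, 2 ≤ (((X ^ 6 + C 53 * X ^ 4 - C 5940 * X ^ 2 + C 62208 - C ((189 / 22)) * (X * (C 3 * X ^ 4 - C 172 * X ^ 2 + C 1600)) : ℚ[X])).map (algebraMap ℚ ℂ)).rootMultiplicity z →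
        (∃ η : ℚ, (η : ℂ) = z) ∧ (((X ^ 6 + C 53 * X ^ 4 - C 5940 * X ^ 2 + C 62208 - C ((189 / 22)) * (X * (C 3 * X ^ 4 - C 172 * X ^ 2 + C 1600)) : ℚ[X])).map (algebraMap ℚ ℂ)).rootMultiplicity z = 2 := by
    have hC : (C (22 : ℚ) : ℚ[X]) * C ((189 / 22) : ℚ) = C (189 : ℚ) := by
      rw [← C_mul]; norm_num
    have hfac : C ((22:ℚ)) * (X ^ 6 + C 53 * X ^ 4 - C 5940 * X ^ 2 + C 62208 - C ((189 / 22)) * (X * (C 3 * X ^ 4 - C 172 * X ^ 2 + C 1600)))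
        = (X - C (6)) ^ 2 * (C 38016 + C 4272 * X - C 3262 * X ^ 2 - C 303 * X ^ 3 + C 22 * X ^ 4) := by
      have h2 := hC
      simp only [map_ofNat, map_one, map_neg, map_mul, map_add, map_sub, map_pow, Polynomial.C_0, Polynomial.C_1] at h2 ⊢
      linear_combination (-(X * (3 * X ^ 4 - 172 * X ^ 2 + 1600))) * h2
    have hq0 : ((C 38016 + C 4272 * X - C 3262 * X ^ 2 - C 303 * X ^ 3 + C 22 * X ^ 4 : ℚ[X])).eval (6 : ℚ) ≠ 0 := by
      simp only [eval_add, eval_sub, eval_mul, eval_pow, eval_X, eval_C]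
      norm_num
    have hdq : derivative ((C 38016 + C 4272 * X - C 3262 * X ^ 2 - C 303 * X ^ 3 + C 22 * X ^ 4 : ℚ[X])) = (C 4272 - C 6524 * X - C 909 * X ^ 2 + C 88 * X ^ 3) := by
      simp only [derivative_add, derivative_sub, derivative_mul, derivative_X_pow, derivative_X,
        derivative_C, Nat.cast_ofNat, derivative_one]
      simp only [map_ofNat, map_one, map_neg, map_mul, map_add, map_sub, map_pow, Polynomial.C_0, Polynomial.C_1]
      ring
    have hab : ((C 261484034922272 + C 175100608694895 * X - C 12911982719944 * X ^ 2 : ℚ[X])) * (C 38016 + C 4272 * X - C 3262 * X ^ 2 - C 303 * X ^ 3 + C 22 * X ^ 4) + (C 1015560695445384 - C 268765580582254 * X - C 54889728208221 * X ^ 2 + C 3227995679986 * X ^ 3) * derivative (C 38016 + C 4272 * X - C 3262 * X ^ 2 - C 303 * X ^ 3 + C 22 * X ^ 4) = C ((14279052362547772800 : ℚ)) := by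
      rw [hdq]
      simp only [map_ofNat, map_one, map_neg, map_mul, map_add, map_sub, map_pow, Polynomial.C_0, Polynomial.C_1]
      ring
    exact case_lemma _ _ (6) (22) (by norm_num) hfac hq0
      (fun z => le_one_of_bezout _ _ _ _ (by norm_num) hab z)
  have case5 : (∃! z : ℂ, 2 ≤ (((X ^ 6 + C 53 * X ^ 4 - C 5940 * X ^ 2 + C 62208 - C ((-189 / 22)) * (X * (C 3 * X ^ 4 - C 172 * X ^ 2 + C 1600)) : ℚ[X])).map (algebraMap ℚ ℂ)).rootMultiplicity z) ∧
      ∀ z : ℂ, 2 ≤ (((X ^ 6 + C 53 * X ^ 4 - C 5940 * X ^ 2 + C 62208 - C ((-189 / 22)) * (X * (C 3 * X ^ 4 - C 172 * X ^ 2 + C 1600)) : ℚ[X])).map (algebraMap ℚ ℂ)).rootMultiplicity z →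
        (∃ η : ℚ, (η : ℂ) = z) ∧ (((X ^ 6 + C 53 * X ^ 4 - C 5940 * X ^ 2 + C 62208 - C ((-189 / 22)) * (X * (C 3 * X ^ 4 - C 172 * X ^ 2 + C 1600)) : ℚ[X])).map (algebraMap ℚ ℂ)).rootMultiplicity z = 2 := by
    have hC : (C (22 : ℚ) : ℚ[X]) * C ((-189 / 22) : ℚ) = C ((-189) : ℚ) := by
      rw [← C_mul]; norm_num
    have hfac : C ((22:ℚ)) * (X ^ 6 + C 53 * X ^ 4 - C 5940 * X ^ 2 + C 62208 - C ((-189 / 22)) * (X * (C 3 * X ^ 4 - C 172 * X ^ 2 + C 1600)))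
        = (X - C ((-6))) ^ 2 * (C 38016 - C 4272 * X - C 3262 * X ^ 2 + C 303 * X ^ 3 + C 22 * X ^ 4) := by
      have h2 := hC
      simp only [map_ofNat, map_one, map_neg, map_mul, map_add, map_sub, map_pow, Polynomial.C_0, Polynomial.C_1] at h2 ⊢
      linear_combination (-(X * (3 * X ^ 4 - 172 * X ^ 2 + 1600))) * h2
    have hq0 : ((C 38016 - C 4272 * X - C 3262 * X ^ 2 + C 303 * X ^ 3 + C 22 * X ^ 4 : ℚ[X])).eval ((-6) : ℚ) ≠ 0 := by
      simp only [eval_add, eval_sub, eval_mul, eval_pow, eval_X, eval_C]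
      norm_num
    have hdq : derivative ((C 38016 - C 4272 * X - C 3262 * X ^ 2 + C 303 * X ^ 3 + C 22 * X ^ 4 : ℚ[X])) = (-C 4272 - C 6524 * X + C 909 * X ^ 2 + C 88 * X ^ 3) := by
      simp only [derivative_add, derivative_sub, derivative_mul, derivative_X_pow, derivative_X,
        derivative_C, Nat.cast_ofNat, derivative_one]
      simp only [map_ofNat, map_one, map_neg, map_mul, map_add, map_sub, map_pow, Polynomial.C_0, Polynomial.C_1]
      ring
    have hab : ((C 261484034922272 - C 175100608694895 * X - C 12911982719944 * X ^ 2 : ℚ[X])) * (C 38016 - C 4272 * X - C 3262 * X ^ 2 + C 303 * X ^ 3 + C 22 * X ^ 4) + (-C 1015560695445384 - C 268765580582254 * X + C 54889728208221 * X ^ 2 + C 3227995679986 * X ^ 3) * derivative (C 38016 - C 4272 * X - C 3262 * X ^ 2 + C 303 * X ^ 3 + C 22 * X ^ 4) = C ((14279052362547772800 : ℚ)) := by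
      rw [hdq]
      simp only [map_ofNat, map_one, map_neg, map_mul, map_add, map_sub, map_pow, Polynomial.C_0, Polynomial.C_1]
      ring
    exact case_lemma _ _ ((-6)) (22) (by norm_num) hfac hq0
      (fun z => le_one_of_bezout _ _ _ _ (by norm_num) hab z)
  have case6 : (∃! z : ℂ, 2 ≤ (((X ^ 6 + C 53 * X ^ 4 - C 5940 * X ^ 2 + C 62208 - C ((918 / 59)) * (X * (C 3 * X ^ 4 - C 172 * X ^ 2 + C 1600)) : ℚ[X])).map (algebraMap ℚ ℂ)).rootMultiplicity z) ∧
      ∀ z : ℂ, 2 ≤ (((X ^ 6 + C 53 * X ^ 4 - C 5940 * X ^ 2 + C 62208 - C ((918 / 59)) * (X * (C 3 * X ^ 4 - C 172 * X ^ 2 + C 1600)) : ℚ[X])).map (algebraMap ℚ ℂ)).rootMultiplicity z →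
        (∃ η : ℚ, (η : ℂ) = z) ∧ (((X ^ 6 + C 53 * X ^ 4 - C 5940 * X ^ 2 + C 62208 - C ((918 / 59)) * (X * (C 3 * X ^ 4 - C 172 * X ^ 2 + C 1600)) : ℚ[X])).map (algebraMap ℚ ℂ)).rootMultiplicity z = 2 := by
    have hC : (C (59 : ℚ) : ℚ[X]) * C ((918 / 59) : ℚ) = C (918 : ℚ) := by
      rw [← C_mul]; norm_num
    have hfac : C ((59:ℚ)) * (X ^ 6 + C 53 * X ^ 4 - C 5940 * X ^ 2 + C 62208 - C ((918 / 59)) * (X * (C 3 * X ^ 4 - C 172 * X ^ 2 + C 1600)))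
        = (X - C (3)) ^ 2 * (C 407808 + C 108672 * X - C 11804 * X ^ 2 - C 2400 * X ^ 3 + C 59 * X ^ 4) := by
      have h2 := hC
      simp only [map_ofNat, map_one, map_neg, map_mul, map_add, map_sub, map_pow, Polynomial.C_0, Polynomial.C_1] at h2 ⊢
      linear_combination (-(X * (3 * X ^ 4 - 172 * X ^ 2 + 1600))) * h2
    have hq0 : ((C 407808 + C 108672 * X - C 11804 * X ^ 2 - C 2400 * X ^ 3 + C 59 * X ^ 4 : ℚ[X])).eval (3 : ℚ) ≠ 0 := by
      simp only [eval_add, eval_sub, eval_mul, eval_pow, eval_X, eval_C]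
      norm_num
    have hdq : derivative ((C 407808 + C 108672 * X - C 11804 * X ^ 2 - C 2400 * X ^ 3 + C 59 * X ^ 4 : ℚ[X])) = (C 108672 - C 23608 * X - C 7200 * X ^ 2 + C 236 * X ^ 3) := by
      simp only [derivative_add, derivative_sub, derivative_mul, derivative_X_pow, derivative_X,
        derivative_C, Nat.cast_ofNat, derivative_one]
      simp only [map_ofNat, map_one, map_neg, map_mul, map_add, map_sub, map_pow, Polynomial.C_0, Polynomial.C_1]
      ring
    have hab : ((-C 49552207664911624 + C 40537586896787424 * X - C 1180166472506572 * X ^ 2 : ℚ[X])) * (C 407808 + C 108672 * X - C 11804 * X ^ 2 - C 2400 * X ^ 3 + C 59 * X ^ 4) + (C 446363469964032576 - C 5602785693949948 * X - C 13134819959383056 * X ^ 2 + C 295041618126643 * X ^ 3) * derivative (C 407808 + C 108672 * X - C 11804 * X ^ 2 - C 2400 * X ^ 3 + C 59 * X ^ 4) = C ((28299424304519068538880 : ℚ)) := by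
      rw [hdq]
      simp only [map_ofNat, map_one, map_neg, map_mul, map_add, map_sub, map_pow, Polynomial.C_0, Polynomial.C_1]
      ring
    exact case_lemma _ _ (3) (59) (by norm_num) hfac hq0
      (fun z => le_one_of_bezout _ _ _ _ (by norm_num) hab z)
  have case7 : (∃! z : ℂ, 2 ≤ (((X ^ 6 + C 53 * X ^ 4 - C 5940 * X ^ 2 + C 62208 - C ((-918 / 59)) * (X * (C 3 * X ^ 4 - C 172 * X ^ 2 + C 1600)) : ℚ[X])).map (algebraMap ℚ ℂ)).rootMultiplicity z) ∧
      ∀ z : ℂ, 2 ≤ (((X ^ 6 + C 53 * X ^ 4 - C 5940 * X ^ 2 + C 62208 - C ((-918 / 59)) * (X * (C 3 * X ^ 4 - C 172 * X ^ 2 + C 1600)) : ℚ[X])).map (algebraMap ℚ ℂ)).rootMultiplicity z →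
        (∃ η : ℚ, (η : ℂ) = z) ∧ (((X ^ 6 + C 53 * X ^ 4 - C 5940 * X ^ 2 + C 62208 - C ((-918 / 59)) * (X * (C 3 * X ^ 4 - C 172 * X ^ 2 + C 1600)) : ℚ[X])).map (algebraMap ℚ ℂ)).rootMultiplicity z = 2 := by
    have hC : (C (59 : ℚ) : ℚ[X]) * C ((-918 / 59) : ℚ) = C ((-918) : ℚ) := by
      rw [← C_mul]; norm_num
    have hfac : C ((59:ℚ)) * (X ^ 6 + C 53 * X ^ 4 - C 5940 * X ^ 2 + C 62208 - C ((-918 / 59)) * (X * (C 3 * X ^ 4 - C 172 * X ^ 2 + C 1600)))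
        = (X - C ((-3))) ^ 2 * (C 407808 - C 108672 * X - C 11804 * X ^ 2 + C 2400 * X ^ 3 + C 59 * X ^ 4) := by
      have h2 := hC
      simp only [map_ofNat, map_one, map_neg, map_mul, map_add, map_sub, map_pow, Polynomial.C_0, Polynomial.C_1] at h2 ⊢
      linear_combination (-(X * (3 * X ^ 4 - 172 * X ^ 2 + 1600))) * h2
    have hq0 : ((C 407808 - C 108672 * X - C 11804 * X ^ 2 + C 2400 * X ^ 3 + C 59 * X ^ 4 : ℚ[X])).eval ((-3) : ℚ) ≠ 0 := by
      simp only [eval_add, eval_sub, eval_mul, eval_pow, eval_X, eval_C]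
      norm_num
    have hdq : derivative ((C 407808 - C 108672 * X - C 11804 * X ^ 2 + C 2400 * X ^ 3 + C 59 * X ^ 4 : ℚ[X])) = (-C 108672 - C 23608 * X + C 7200 * X ^ 2 + C 236 * X ^ 3) := by
      simp only [derivative_add, derivative_sub, derivative_mul, derivative_X_pow, derivative_X,
        derivative_C, Nat.cast_ofNat, derivative_one]
      simp only [map_ofNat, map_one, map_neg, map_mul, map_add, map_sub, map_pow, Polynomial.C_0, Polynomial.C_1]
      ring
    have hab : ((-C 49552207664911624 - C 40537586896787424 * X - C 1180166472506572 * X ^ 2 : ℚ[X])) * (C 407808 - C 108672 * X - C 11804 * X ^ 2 + C 2400 * X ^ 3 + C 59 * X ^ 4) + (-C 446363469964032576 - C 5602785693949948 * X + C 13134819959383056 * X ^ 2 + C 295041618126643 * X ^ 3) * derivative (C 407808 - C 108672 * X - C 11804 * X ^ 2 + C 2400 * X ^ 3 + C 59 * X ^ 4) = C ((28299424304519068538880 : ℚ)) := by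
      rw [hdq]
      simp only [map_ofNat, map_one, map_neg, map_mul, map_add, map_sub, map_pow, Polynomial.C_0, Polynomial.C_1]
      ring
    exact case_lemma _ _ ((-3)) (59) (by norm_num) hfac hq0
      (fun z => le_one_of_bezout _ _ _ _ (by norm_num) hab z)
  have case8 : (∃! z : ℂ, 2 ≤ (((X ^ 6 + C 53 * X ^ 4 - C 5940 * X ^ 2 + C 62208 - C ((1733 / 250)) * (X * (C 3 * X ^ 4 - C 172 * X ^ 2 + C 1600)) : ℚ[X])).map (algebraMap ℚ ℂ)).rootMultiplicity z) ∧
      ∀ z : ℂ, 2 ≤ (((X ^ 6 + C 53 * X ^ 4 - C 5940 * X ^ 2 + C 62208 - C ((1733 / 250)) * (X * (C 3 * X ^ 4 - C 172 * X ^ 2 + C 1600)) : ℚ[X])).map (algebraMap ℚ ℂ)).rootMultiplicity z →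
        (∃ η : ℚ, (η : ℂ) = z) ∧ (((X ^ 6 + C 53 * X ^ 4 - C 5940 * X ^ 2 + C 62208 - C ((1733 / 250)) * (X * (C 3 * X ^ 4 - C 172 * X ^ 2 + C 1600)) : ℚ[X])).map (algebraMap ℚ ℂ)).rootMultiplicity z = 2 := by
    have hC : (C (250 : ℚ) : ℚ[X]) * C ((1733 / 250) : ℚ) = C (1733 : ℚ) := by
      rw [← C_mul]; norm_num
    have hfac : C ((250:ℚ)) * (X ^ 6 + C 53 * X ^ 4 - C 5940 * X ^ 2 + C 62208 - C ((1733 / 250)) * (X * (C 3 * X ^ 4 - C 172 * X ^ 2 + C 1600)))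
        = (X - C (10)) ^ 2 * (C 155520 + C 3376 * X - C 15730 * X ^ 2 - C 199 * X ^ 3 + C 250 * X ^ 4) := by
      have h2 := hC
      simp only [map_ofNat, map_one, map_neg, map_mul, map_add, map_sub, map_pow, Polynomial.C_0, Polynomial.C_1] at h2 ⊢
      linear_combination (-(X * (3 * X ^ 4 - 172 * X ^ 2 + 1600))) * h2
    have hq0 : ((C 155520 + C 3376 * X - C 15730 * X ^ 2 - C 199 * X ^ 3 + C 250 * X ^ 4 : ℚ[X])).eval (10 : ℚ) ≠ 0 := by
      simp only [eval_add, eval_sub, eval_mul, eval_pow, eval_X, eval_C]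
      norm_num
    have hdq : derivative ((C 155520 + C 3376 * X - C 15730 * X ^ 2 - C 199 * X ^ 3 + C 250 * X ^ 4 : ℚ[X])) = (C 3376 - C 31460 * X - C 597 * X ^ 2 + C 1000 * X ^ 3) := by
      simp only [derivative_add, derivative_sub, derivative_mul, derivative_X_pow, derivative_X,
        derivative_C, Nat.cast_ofNat, derivative_one]
      simp only [map_ofNat, map_one, map_neg, map_mul, map_add, map_sub, map_pow, Polynomial.C_0, Polynomial.C_1]
      ring
    have hab : ((C 4227529150145674720 + C 405904236976651121 * X - C 367648855754893000 * X ^ 2 : ℚ[X])) * (C 155520 + C 3376 * X - C 15730 * X ^ 2 - C 199 * X ^ 3 + C 250 * X ^ 4) + (C 2037499684959864312 - C 3939166249011625870 * X - C 119766589817968707 * X ^ 2 + C 91912213938723250 * X ^ 3) * derivative (C 155520 + C 3376 * X - C 15730 * X ^ 2 - C 199 * X ^ 3 + C 250 * X ^ 4) = C ((664343932367079834371712 : ℚ)) := by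
      rw [hdq]
      simp only [map_ofNat, map_one, map_neg, map_mul, map_add, map_sub, map_pow, Polynomial.C_0, Polynomial.C_1]
      ring
    exact case_lemma _ _ (10) (250) (by norm_num) hfac hq0
      (fun z => le_one_of_bezout _ _ _ _ (by norm_num) hab z)
  have case9 : (∃! z : ℂ, 2 ≤ (((X ^ 6 + C 53 * X ^ 4 - C 5940 * X ^ 2 + C 62208 - C ((-1733 / 250)) * (X * (C 3 * X ^ 4 - C 172 * X ^ 2 + C 1600)) : ℚ[X])).map (algebraMap ℚ ℂ)).rootMultiplicity z) ∧
      ∀ z : ℂ, 2 ≤ (((X ^ 6 + C 53 * X ^ 4 - C 5940 * X ^ 2 + C 62208 - C ((-1733 / 250)) * (X * (C 3 * X ^ 4 - C 172 * X ^ 2 + C 1600)) : ℚ[X])).map (algebraMap ℚ ℂ)).rootMultiplicity z →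
        (∃ η : ℚ, (η : ℂ) = z) ∧ (((X ^ 6 + C 53 * X ^ 4 - C 5940 * X ^ 2 + C 62208 - C ((-1733 / 250)) * (X * (C 3 * X ^ 4 - C 172 * X ^ 2 + C 1600)) : ℚ[X])).map (algebraMap ℚ ℂ)).rootMultiplicity z = 2 := by
    have hC : (C (250 : ℚ) : ℚ[X]) * C ((-1733 / 250) : ℚ) = C ((-1733) : ℚ) := by
      rw [← C_mul]; norm_num
    have hfac : C ((250:ℚ)) * (X ^ 6 + C 53 * X ^ 4 - C 5940 * X ^ 2 + C 62208 - C ((-1733 / 250)) * (X * (C 3 * X ^ 4 - C 172 * X ^ 2 + C 1600)))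
        = (X - C ((-10))) ^ 2 * (C 155520 - C 3376 * X - C 15730 * X ^ 2 + C 199 * X ^ 3 + C 250 * X ^ 4) := by
      have h2 := hC
      simp only [map_ofNat, map_one, map_neg, map_mul, map_add, map_sub, map_pow, Polynomial.C_0, Polynomial.C_1] at h2 ⊢
      linear_combination (-(X * (3 * X ^ 4 - 172 * X ^ 2 + 1600))) * h2
    have hq0 : ((C 155520 - C 3376 * X - C 15730 * X ^ 2 + C 199 * X ^ 3 + C 250 * X ^ 4 : ℚ[X])).eval ((-10) : ℚ) ≠ 0 := by
      simp only [eval_add, eval_sub, eval_mul, eval_pow, eval_X, eval_C]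
      norm_num
    have hdq : derivative ((C 155520 - C 3376 * X - C 15730 * X ^ 2 + C 199 * X ^ 3 + C 250 * X ^ 4 : ℚ[X])) = (-C 3376 - C 31460 * X + C 597 * X ^ 2 + C 1000 * X ^ 3) := by
      simp only [derivative_add, derivative_sub, derivative_mul, derivative_X_pow, derivative_X,
        derivative_C, Nat.cast_ofNat, derivative_one]
      simp only [map_ofNat, map_one, map_neg, map_mul, map_add, map_sub, map_pow, Polynomial.C_0, Polynomial.C_1]
      ring
    have hab : ((C 4227529150145674720 - C 405904236976651121 * X - C 367648855754893000 * X ^ 2 : ℚ[X])) * (C 155520 - C 3376 * X - C 15730 * X ^ 2 + C 199 * X ^ 3 + C 250 * X ^ 4) + (-C 2037499684959864312 - C 3939166249011625870 * X + C 119766589817968707 * X ^ 2 + C 91912213938723250 * X ^ 3) * derivative (C 155520 - C 3376 * X - C 15730 * X ^ 2 + C 199 * X ^ 3 + C 250 * X ^ 4) = C ((664343932367079834371712 : ℚ)) := by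
      rw [hdq]
      simp only [map_ofNat, map_one, map_neg, map_mul, map_add, map_sub, map_pow, Polynomial.C_0, Polynomial.C_1]
      ring
    exact case_lemma _ _ ((-10)) (250) (by norm_num) hfac hq0
      (fun z => le_one_of_bezout _ _ _ _ (by norm_num) hab z)

  constructor
  · ext γ
    simp only [Set.mem_setOf_eq, Set.mem_insert_iff, Set.mem_singleton_iff]
    constructor
    · rintro ⟨z, hz⟩
      by_contra hS
      push_neg at hS
      obtain ⟨h1, h2, h3, h4, h5, h6, h7, h8, h9, h10⟩ := hS
      have e1 : γ - 7 ≠ 0 := sub_ne_zero.mpr h1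
      have e2 : γ + 7 ≠ 0 := fun hh => h2 (by linarith)
      have e3 : 8 * γ - 79 ≠ 0 := fun hh => h3 (by linarith)
      have e4 : 8 * γ + 79 ≠ 0 := fun hh => h4 (by linarith)
      have e5 : 22 * γ - 189 ≠ 0 := fun hh => h5 (by linarith)
      have e6 : 22 * γ + 189 ≠ 0 := fun hh => h6 (by linarith)
      have e7 : 59 * γ - 918 ≠ 0 := fun hh => h7 (by linarith)
      have e8 : 59 * γ + 918 ≠ 0 := fun hh => h8 (by linarith)
      have e9 : 250 * γ - 1733 ≠ 0 := fun hh => h9 (by linarith)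
      have e10 : 250 * γ + 1733 ≠ 0 := fun hh => h10 (by linarith)
      have he : (6144 * (γ - 7) * (γ + 7) * (8 * γ - 79) * (8 * γ + 79) * (22 * γ - 189) * (22 * γ + 189) * (59 * γ - 918) * (59 * γ + 918) * (250 * γ - 1733) * (250 * γ + 1733) : ℚ) ≠ 0 :=
        mul_ne_zero (mul_ne_zero (mul_ne_zero (mul_ne_zero (mul_ne_zero (mul_ne_zero (mul_ne_zero
          (mul_ne_zero (mul_ne_zero (mul_ne_zero (by norm_num) e1) e2) e3) e4) e5) e6) e7) e8) e9) e10
      have hle := le_one_of_bezout _ _ _ _ he (gen_bezout γ) z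
      omega
    · rintro (rfl | rfl | rfl | rfl | rfl | rfl | rfl | rfl | rfl | rfl)
      · exact case0.1.exists
      · exact case1.1.exists
      · exact case2.1.exists
      · exact case3.1.exists
      · exact case4.1.exists
      · exact case5.1.exists
      · exact case6.1.exists
      · exact case7.1.exists
      · exact case8.1.exists
      · exact case9.1.exists
  · intro γ hγ
    simp only [Set.mem_insert_iff, Set.mem_singleton_iff] at hγ
    rcases hγ with rfl | rfl | rfl | rfl | rfl | rfl | rfl | rfl | rfl | rfl
    · exact case0
    · exact case1
    · exact case2
    · exact case3
    · exact case4
    · exact case5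
    · exact case6
    · exact case7
    · exact case8
    · exact case9
end
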